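/- arXiv:2004.14885 — 4 statements merged into one kernel-verified Lean document; each statement's English description precedes it below -/
import Mathlib

section
/- Let Z be a random vector in ℝ^n, and W = Z + Mξ where M is a random positive semidefinite matrix (possibly dependent on Z) and ξ ∼ N(0, I_n) is independent of (Z, M). Then for any convex function φ: ℝ^n → ℝ, almost surely P(φ(W) ≥ φ(Z) | Z) ≥ 1/2. -/
/-! Since `ξ` is symmetric and independent of `(Z, M)`, replacing `ξ` by `-ξ` does not change
the joint law of `((Z, M), ξ)`, so the events `φ Z ≤ φ (Z + M ξ)` and `φ Z ≤ φ (Z - M ξ)`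
have the same conditional probability given `Z`. By convexity
`2 φ z ≤ φ (z + v) + φ (z - v)`, so at least one of the two events always occurs, and each
conditional probability is at least `1/2`. -/

open MeasureTheory ProbabilityTheory Real

instance (n : ℕ) : MeasurableSpace (Matrix (Fin n) (Fin n) ℝ) :=
  (inferInstance : MeasurableSpace (Fin n → Fin n → ℝ))

theorem ConvexOn.le_or_le_of_add_sub {E : Type*} [AddCommGroup E] [Module ℝ E] {φ : E → ℝ}
    (hφ : ConvexOn ℝ Set.univ φ) (z v : E) : φ z ≤ φ (z + v) ∨ φ z ≤ φ (z - v) := by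
  by_contra! h
  have hmid := hφ.2 (Set.mem_univ (z + v)) (Set.mem_univ (z - v))
    (by norm_num : (0 : ℝ) ≤ 1 / 2) (by norm_num : (0 : ℝ) ≤ 1 / 2) (by norm_num)
  rw [show (1 / 2 : ℝ) • (z + v) + (1 / 2 : ℝ) • (z - v) = z by module, smul_eq_mul,
    smul_eq_mul] at hmid
  linarith [h.1, h.2]

theorem measurePreserving_neg_gaussianReal (v : NNReal) :
    MeasurePreserving (fun x : ℝ => -x) (gaussianReal 0 v) (gaussianReal 0 v) :=
  ⟨measurable_neg, by rw [gaussianReal_map_neg, neg_zero]⟩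

theorem measurePreserving_neg_pi_gaussianReal {ι : Type*} [Fintype ι] (v : ι → NNReal) :
    MeasurePreserving (fun x : ι → ℝ => -x) (Measure.pi fun i => gaussianReal 0 (v i))
      (Measure.pi fun i => gaussianReal 0 (v i)) :=
  measurePreserving_pi _ _ fun i => measurePreserving_neg_gaussianReal (v i)

theorem Matrix.measurable_mulVec_prod (n : ℕ) :
    Measurable fun p : Matrix (Fin n) (Fin n) ℝ × (Fin n → ℝ) => p.1.mulVec p.2 := by
  refine measurable_pi_lambda _ fun i => ?_
  simp only [Matrix.mulVec, dotProduct]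
  exact Finset.measurable_sum _ fun j _ =>
    ((measurable_pi_apply j).comp ((measurable_pi_apply i).comp measurable_fst)).mul
      ((measurable_pi_apply j).comp measurable_snd)

section

variable {Ω α β : Type*} {m mΩ : MeasurableSpace Ω} [MeasurableSpace α] [MeasurableSpace β]
  {μ : Measure Ω} [IsFiniteMeasure μ]

theorem ProbabilityTheory.IndepFun.identDistrib_prodMk_comp
    {X : Ω → α} {Y : Ω → β} (hX : Measurable X) (hY : Measurable Y) (hXY : IndepFun X Y μ)
    {σ : β → β} (hσ : MeasurePreserving σ (μ.map Y) (μ.map Y)) :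
    IdentDistrib (fun ω => (X ω, Y ω)) (fun ω => (X ω, σ (Y ω))) μ μ := by
  have hσY : Measurable (σ ∘ Y) := hσ.measurable.comp hY
  refine ⟨(hX.prodMk hY).aemeasurable, (hX.prodMk hσY).aemeasurable, ?_⟩
  calc μ.map (fun ω => (X ω, Y ω)) = (μ.map X).prod (μ.map Y) :=
        (indepFun_iff_map_prod_eq_prod_map_map hX.aemeasurable hY.aemeasurable).mp hXY
    _ = (μ.map X).prod (μ.map (σ ∘ Y)) := by
        rw [← Measure.map_map hσ.measurable hY, hσ.map_eq]
    _ = μ.map (fun ω => (X ω, σ (Y ω))) :=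
        ((indepFun_iff_map_prod_eq_prod_map_map hX.aemeasurable hσY.aemeasurable).mp
          (hXY.comp measurable_id hσ.measurable)).symm

theorem condExp_indicator_preimage_eq_of_identDistrib
    {X : Ω → α} {Y Y' : Ω → β} (hX : Measurable X) (hY : Measurable Y) (hY' : Measurable Y')
    (h : IdentDistrib (fun ω => (X ω, Y ω)) (fun ω => (X ω, Y' ω)) μ μ)
    (hm : m ≤ MeasurableSpace.comap X inferInstance) {B : Set (α × β)} (hB : MeasurableSet B) :
    μ[((fun ω => (X ω, Y ω)) ⁻¹' B).indicator fun _ => (1 : ℝ) | m] =ᵐ[μ]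
      μ[((fun ω => (X ω, Y' ω)) ⁻¹' B).indicator fun _ => (1 : ℝ) | m] := by
  have hm₀ : m ≤ mΩ := hm.trans hX.comap_le
  have hP := (hX.prodMk hY) hB
  have hP' := (hX.prodMk hY') hB
  refine ae_eq_condExp_of_forall_setIntegral_eq hm₀ ((integrable_const 1).indicator hP')
    (fun s _ _ => integrable_condExp.integrableOn) (fun s hs _ => ?_)
    stronglyMeasurable_condExp.aestronglyMeasurable
  obtain ⟨t, ht, rfl⟩ := hm s hs
  rw [setIntegral_condExp hm₀ ((integrable_const 1).indicator hP) hs,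
    setIntegral_indicator hP, setIntegral_indicator hP', setIntegral_const, setIntegral_const]
  exact congrArg (fun r => ENNReal.toReal r • (1 : ℝ))
    (h.measure_mem_eq ((measurable_fst ht).inter hB))

theorem ae_half_le_condExp_indicator_of_union_eq_univ (hm : m ≤ mΩ) {A A' : Set Ω}
    (hA : MeasurableSet A) (hA' : MeasurableSet A') (hunion : A ∪ A' = Set.univ)
    (hsymm : μ[A.indicator fun _ => (1 : ℝ) | m] =ᵐ[μ]
      μ[A'.indicator fun _ => (1 : ℝ) | m]) :
    ∀ᵐ ω ∂μ, (1 : ℝ) / 2 ≤ μ[A.indicator fun _ => (1 : ℝ) | m] ω := by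
  have hcover : (fun _ => (1 : ℝ)) ≤ A.indicator (fun _ => 1) + A'.indicator fun _ => 1 := by
    intro ω
    rcases hunion.symm ▸ Set.mem_univ ω with hω | hω
    · simp [Set.indicator_of_mem hω, Set.indicator_nonneg]
    · simp [Set.indicator_of_mem hω, Set.indicator_nonneg]
  have hint : Integrable (A.indicator fun _ => (1 : ℝ)) μ := (integrable_const 1).indicator hA
  have hint' : Integrable (A'.indicator fun _ => (1 : ℝ)) μ := (integrable_const 1).indicator hA'
  filter_upwards [condExp_mono (m := m) (integrable_const 1) (hint.add hint') (ae_of_all μ hcover),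
    condExp_add (m := m) hint hint', hsymm] with ω hmono hadd hsymmω
  rw [condExp_const hm, hadd, Pi.add_apply, ← hsymmω] at hmono
  linarith

end

theorem stmt_5_general {Ω : Type*} [MeasurableSpace Ω] (μ : Measure Ω) [IsProbabilityMeasure μ]
    (n : ℕ) (Z ξ : Ω → (Fin n → ℝ)) (M : Ω → Matrix (Fin n) (Fin n) ℝ)
    (hZ : Measurable Z) (hξ : Measurable ξ) (hM : Measurable M)
    (hlaw : Measure.map ξ μ = Measure.pi fun _ : Fin n => gaussianReal 0 1)
    (hindep : IndepFun (fun ω => (Z ω, M ω)) ξ μ)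
    (φ : (Fin n → ℝ) → ℝ) (hφ : ConvexOn ℝ Set.univ φ) (hφm : Measurable φ)
    (W : Ω → (Fin n → ℝ)) (hW : W = fun ω => Z ω + (M ω).mulVec (ξ ω)) :
    ∀ᵐ ω ∂μ,
      (1 : ℝ) / 2 ≤
        (μ[Set.indicator {ω' | φ (Z ω') ≤ φ (W ω')} (fun _ => (1 : ℝ)) |
          MeasurableSpace.comap Z inferInstance]) ω := by
  subst hW
  have hX : Measurable fun ω => (Z ω, M ω) := hZ.prodMk hM
  have hm : MeasurableSpace.comap Z inferInstance ≤
      MeasurableSpace.comap (fun ω => (Z ω, M ω)) inferInstance :=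
    Measurable.comap_le (f := Z) (measurable_fst.comp (comap_measurable _))
  have hneg : MeasurePreserving (fun x => -x) (μ.map ξ) (μ.map ξ) := by
    rw [hlaw]
    exact measurePreserving_neg_pi_gaussianReal _
  set B : Set (((Fin n → ℝ) × Matrix (Fin n) (Fin n) ℝ) × (Fin n → ℝ)) :=
    {p | φ p.1.1 ≤ φ (p.1.1 + p.1.2.mulVec p.2)}
  have hB : MeasurableSet B := measurableSet_le (hφm.comp measurable_fst.fst)
    (hφm.comp (measurable_fst.fst.add
      ((Matrix.measurable_mulVec_prod n).comp (measurable_fst.snd.prodMk measurable_snd))))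
  have hunion :
      (fun ω => ((Z ω, M ω), ξ ω)) ⁻¹' B ∪ (fun ω => ((Z ω, M ω), -ξ ω)) ⁻¹' B = Set.univ := by
    refine Set.eq_univ_of_forall fun ω => ?_
    simpa [B, Matrix.mulVec_neg, ← sub_eq_add_neg] using
      hφ.le_or_le_of_add_sub (Z ω) ((M ω).mulVec (ξ ω))
  exact ae_half_le_condExp_indicator_of_union_eq_univ hZ.comap_le ((hX.prodMk hξ) hB)
    ((hX.prodMk hξ.neg) hB) hunion (condExp_indicator_preimage_eq_of_identDistrib hX hξ hξ.neg
      (hindep.identDistrib_prodMk_comp hX hξ hneg) hm hB)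

/-- If `W = Z + M ξ` with `M` a random PSD matrix and `ξ` a standard Gaussian
independent of `(Z, M)`, then for convex `φ`, a.s. `P(φ(W) ≥ φ(Z) | Z) ≥ 1/2`. -/
theorem stmt_5 {Ω : Type*} [MeasurableSpace Ω] (μ : Measure Ω) [IsProbabilityMeasure μ]
    (n : ℕ) (Z ξ : Ω → (Fin n → ℝ)) (M : Ω → Matrix (Fin n) (Fin n) ℝ)
    (hZ : Measurable Z) (hξ : Measurable ξ) (hM : Measurable M)
    (hlaw : Measure.map ξ μ = Measure.pi fun _ : Fin n => gaussianReal 0 1)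
    (hindep : IndepFun (fun ω => (Z ω, M ω)) ξ μ)
    (hPSD : ∀ᵐ ω ∂μ, (M ω).PosSemidef)
    (φ : (Fin n → ℝ) → ℝ) (hφ : ConvexOn ℝ Set.univ φ) (hφm : Measurable φ)
    (W : Ω → (Fin n → ℝ)) (hW : W = fun ω => Z ω + (M ω).mulVec (ξ ω)) :
    ∀ᵐ ω ∂μ,
      (1 : ℝ) / 2 ≤
        (μ[Set.indicator {ω' | φ (Z ω') ≤ φ (W ω')} (fun _ => (1 : ℝ)) |
          MeasurableSpace.comap Z inferInstance]) ω :=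
  stmt_5_general μ n Z ξ M hZ hξ hM hlaw hindep φ hφ hφm W hW
end

section
/- Let S ⊆ ℝ^n be a measurable set with standard Gaussian measure γ(S) = 2^{-N}. Then the Gaussian barycenter b(S) = (∫_S x dγ)/γ(S) satisfies ‖b(S)‖ ≤ √(2 log 2 · N). -/
open MeasureTheory ProbabilityTheory Real

noncomputable def stdGaussian (n : ℕ) : Measure (EuclideanSpace ℝ (Fin n)) :=
  Measure.map (MeasurableEquiv.toLp 2 (Fin n → ℝ))
    (Measure.pi fun _ : Fin n => gaussianReal 0 1)

/-!
For a unit vector `θ`, the coordinate `⟪θ, x⟫` is standard normal under `γ`, so by Jensen's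
inequality `exp (t ⨍_S ⟪θ, x⟫) ≤ ⨍_S exp (t ⟪θ, x⟫) ≤ exp (t² / 2) / γ(S)`. Choosing
`θ = b(S) / ‖b(S)‖` and `t = ‖b(S)‖` gives `‖b(S)‖² / 2 ≤ log (1 / γ(S)) = N log 2`.
-/

section SetAverage

variable {Ω : Type*} [MeasurableSpace Ω] {μ : Measure Ω} {s : Set Ω}

lemma setAverage_le_log_integral_exp_sub_log_measureReal [IsFiniteMeasure μ] {f : Ω → ℝ}
    (hμs : μ s ≠ 0) (hf : IntegrableOn f s μ) (hexp : Integrable (fun x ↦ exp (f x)) μ) :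
    ⨍ x in s, f x ∂μ ≤ log (∫ x, exp (f x) ∂μ) - log (μ.real s) := by
  have hs : 0 < μ.real s := ENNReal.toReal_pos hμs (measure_ne_top μ s)
  have : NeZero μ := ⟨fun h ↦ hμs (by simp [h])⟩
  have hI : 0 < ∫ x, exp (f x) ∂μ := integral_exp_pos hexp
  rw [← log_div hI.ne' hs.ne', le_log_iff_exp_le (by positivity)]
  calc exp (⨍ x in s, f x ∂μ) ≤ ⨍ x in s, exp (f x) ∂μ :=
        convexOn_exp.map_set_average_le continuous_exp.continuousOn isClosed_univ hμs
          (measure_ne_top μ s) (by simp) hf hexp.integrableOn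
    _ ≤ (∫ x, exp (f x) ∂μ) / μ.real s := by
        rw [setAverage_eq, smul_eq_mul, inv_mul_eq_div]
        exact div_le_div_of_nonneg_right
          (setIntegral_le_integral hexp (.of_forall fun x ↦ (exp_pos _).le)) hs.le

lemma setAverage_le_sqrt_two_mul_log_of_map_eq_gaussianReal [IsProbabilityMeasure μ]
    {X : Ω → ℝ} (hX : μ.map X = gaussianReal 0 1) (hμs : μ s ≠ 0) :
    ⨍ x in s, X x ∂μ ≤ √(2 * log (μ.real s)⁻¹) := by
  set a := ⨍ x in s, X x ∂μ
  rcases le_or_gt a 0 with ha | ha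
  · exact ha.trans (sqrt_nonneg _)
  have hXm : AEMeasurable X μ := aemeasurable_of_map_neZero (by rw [hX]; infer_instance)
  have hXi : Integrable X μ :=
    (integrable_map_measure (g := id) (by fun_prop) hXm).mp
      (by rw [hX]; exact IsGaussian.integrable_id)
  have hmgf : ∫ x, exp (a * X x) ∂μ = exp (a ^ 2 / 2) := by
    simpa [mgf] using mgf_gaussianReal hX a
  have hexp : Integrable (fun x ↦ exp (a * X x)) μ := by
    rw [← mgf_pos_iff, mgf, hmgf]
    exact exp_pos _
  have havg : ⨍ x in s, a * X x ∂μ = a ^ 2 := by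
    rw [setAverage_eq, smul_eq_mul, integral_const_mul, mul_left_comm,
      ← smul_eq_mul (a := (μ.real s)⁻¹), ← setAverage_eq, sq]
  have key := setAverage_le_log_integral_exp_sub_log_measureReal hμs
    (hXi.const_mul a).integrableOn hexp
  rw [havg, hmgf, log_exp] at key
  rw [log_inv]
  exact le_sqrt_of_sq_le (by linarith)

end SetAverage

section StdGaussian

variable {E : Type*} [NormedAddCommGroup E] [InnerProductSpace ℝ E] [FiniteDimensional ℝ E]
  [MeasurableSpace E] [BorelSpace E]

lemma stdGaussian_map_inner_of_norm_eq_one {θ : E} (hθ : ‖θ‖ = 1) :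
    (ProbabilityTheory.stdGaussian E).map (fun x ↦ inner ℝ θ x) = gaussianReal 0 1 := by
  have h := IsGaussian.map_eq_gaussianReal (μ := ProbabilityTheory.stdGaussian E) (innerSL ℝ θ)
  rw [integral_strongDual_stdGaussian, variance_dual_stdGaussian, innerSL_apply_norm, hθ] at h
  simpa using h

lemma norm_setAverage_stdGaussian_le {s : Set E} (hs : ProbabilityTheory.stdGaussian E s ≠ 0) :
    ‖⨍ x in s, x ∂(ProbabilityTheory.stdGaussian E)‖
      ≤ √(2 * log ((ProbabilityTheory.stdGaussian E).real s)⁻¹) := by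
  set γ := ProbabilityTheory.stdGaussian E
  set b := ⨍ x in s, x ∂γ
  rcases eq_or_ne b 0 with hb | hb
  · rw [hb, norm_zero]
    exact sqrt_nonneg _
  set θ := ‖b‖⁻¹ • b
  have hθ : ‖θ‖ = 1 := norm_smul_inv_norm hb
  have hb_eq : ‖b‖ = ⨍ x in s, inner ℝ θ x ∂γ := by
    rw [setAverage_eq, integral_inner (f := fun x ↦ x) IsGaussian.integrable_id.integrableOn,
      smul_eq_mul, ← inner_smul_right, ← setAverage_eq, real_inner_smul_left,
      real_inner_self_eq_norm_sq]
    field_simp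
  rw [hb_eq]
  exact setAverage_le_sqrt_two_mul_log_of_map_eq_gaussianReal
    (stdGaussian_map_inner_of_norm_eq_one hθ) hs

end StdGaussian

theorem stmt_12_general (n N : ℕ) (S : Set (EuclideanSpace ℝ (Fin n)))
    (hmeas : stdGaussian n S = (2 : ENNReal)⁻¹ ^ N) :
    ‖((stdGaussian n S).toReal)⁻¹ • ∫ x in S, x ∂(stdGaussian n)‖
      ≤ Real.sqrt (2 * Real.log 2 * N) := by
  have hγ : stdGaussian n = ProbabilityTheory.stdGaussian (EuclideanSpace ℝ (Fin n)) :=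
    map_pi_eq_stdGaussian
  have hlog : Real.log 2 * N = log ((stdGaussian n).real S)⁻¹ := by
    simp [measureReal_def, hmeas, mul_comm]
  rw [← measureReal_def, ← setAverage_eq, mul_assoc, hlog, hγ]
  refine norm_setAverage_stdGaussian_le ?_
  rw [← hγ, hmeas]
  simp

/-- If `γ(S) = 2^{-N}`, the Gaussian barycenter of `S` has norm at most
`√(2 log 2 · N)`. -/
theorem stmt_12 (n N : ℕ) (S : Set (EuclideanSpace ℝ (Fin n))) (hS : MeasurableSet S)
    (hmeas : stdGaussian n S = (2 : ENNReal)⁻¹ ^ N) :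
    ‖((stdGaussian n S).toReal)⁻¹ • ∫ x in S, x ∂(stdGaussian n)‖
      ≤ Real.sqrt (2 * Real.log 2 * N) :=
  stmt_12_general n N S hmeas
end

section
/- Let γ be the standard Gaussian measure on ℝ^n and S a measurable set with 0 < γ(S) < 1. Then ‖∫_S x dγ(x)‖ ≤ γ(S)·√(2 log(1/γ(S))). -/
/-!
Put `v = ∫_S x dγ`. Then `‖v‖² = ∫_S ⟪v, x⟫ dγ`, and under `γ` the linear form `⟪v, ·⟫` is
Gaussian with variance `‖v‖²`, hence sub-Gaussian. For any `f` and `a = γ(S)`, the inequality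
`1 + u ≤ eᵘ` at `u = f - log ∫ e^f + log a`, integrated over `S`, gives
`∫_S f ≤ a (log ∫ e^f - log a)`. Taking `f = t ⟪v, ·⟫` yields
`t ‖v‖² ≤ a (‖v‖² t² / 2 + log (1/a))`, and the optimal `t` gives `‖v‖² ≤ a ‖v‖ √(2 log (1/a))`.
-/

open MeasureTheory ProbabilityTheory Real
open scoped NNReal RealInnerProductSpace

section

variable {α : Type*} [MeasurableSpace α] {μ : Measure α} {S : Set α}

theorem setIntegral_le_measureReal_mul_log_integral_exp {f : α → ℝ} (hf : IntegrableOn f S μ)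
    (hexp : Integrable (fun x ↦ exp (f x)) μ) (hS : 0 < μ.real S) :
    ∫ x in S, f x ∂μ ≤ μ.real S * (log (∫ x, exp (f x) ∂μ) - log (μ.real S)) := by
  set a := μ.real S
  set Z := ∫ x, exp (f x) ∂μ
  have hS_fin : μ S ≠ ⊤ := (ENNReal.toReal_pos_iff.1 hS).2.ne
  have : NeZero μ := ⟨fun h ↦ by simp [a, h] at hS⟩
  have hZ : 0 < Z := integral_exp_pos hexp
  set C := log Z - log a - 1
  -- `1 + u ≤ exp u` at `u = f x - log Z + log a`
  have hpoint (x : α) : f x ≤ C + a / Z * exp (f x) := by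
    have h := add_one_le_exp (f x - log Z + log a)
    rw [exp_add, exp_sub, exp_log hZ, exp_log hS] at h
    rw [div_mul_eq_mul_div, mul_comm a, ← div_mul_eq_mul_div]
    linarith
  have hC : IntegrableOn (fun _ ↦ C) S μ := integrableOn_const hS_fin
  have hexpS_int : IntegrableOn (fun x ↦ a / Z * exp (f x)) S μ := hexp.integrableOn.const_mul _
  have hexpS : ∫ x in S, exp (f x) ∂μ ≤ Z :=
    setIntegral_le_integral hexp (Filter.Eventually.of_forall fun x ↦ (exp_pos _).le)
  calc ∫ x in S, f x ∂μ ≤ ∫ x in S, (C + a / Z * exp (f x)) ∂μ :=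
        setIntegral_mono hf (hC.add hexpS_int) hpoint
    _ = a * C + a / Z * ∫ x in S, exp (f x) ∂μ := by
        rw [integral_add hC hexpS_int, setIntegral_const, integral_const_mul, smul_eq_mul]
    _ ≤ a * C + a / Z * Z := by gcongr
    _ = a * (log Z - log a) := by field_simp; ring

theorem ProbabilityTheory.HasSubgaussianMGF.mul_setIntegral_le {X : α → ℝ} {c : ℝ≥0}
    (hX : HasSubgaussianMGF X c μ) (hS : 0 < μ.real S) (t : ℝ) :
    t * ∫ x in S, X x ∂μ ≤ μ.real S * (c * t ^ 2 / 2 - log (μ.real S)) := by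
  rw [← integral_const_mul]
  calc ∫ x in S, t * X x ∂μ ≤ μ.real S * (cgf X μ t - log (μ.real S)) :=
        setIntegral_le_measureReal_mul_log_integral_exp (hX.integrable.const_mul t).integrableOn
          (hX.integrable_exp_mul t) hS
    _ ≤ μ.real S * (c * t ^ 2 / 2 - log (μ.real S)) := by gcongr; exact hX.cgf_le t

theorem ProbabilityTheory.HasSubgaussianMGF.setIntegral_le {X : α → ℝ} {c : ℝ≥0}
    (hX : HasSubgaussianMGF X c μ) (hS₀ : 0 < μ.real S) (hS₁ : μ.real S < 1) :
    ∫ x in S, X x ∂μ ≤ μ.real S * √(2 * c * log (1 / μ.real S)) := by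
  set a := μ.real S
  set L := log (1 / a)
  have hL : 0 < L := log_pos (one_lt_one_div hS₀ hS₁)
  rcases eq_zero_or_pos c with rfl | hc
  · have hX0 : ∫ x in S, X x ∂μ = 0 :=
      integral_eq_zero_of_ae (ae_restrict_of_ae hX.ae_eq_zero_of_hasSubgaussianMGF_zero)
    simp [hX0]
  set s := √(2 * c * L)
  have hs : 0 < s := sqrt_pos.2 (by positivity)
  have hs2 : s ^ 2 = 2 * c * L := sq_sqrt (by positivity)
  have hlogL : -log a = L := by simp only [L, one_div, log_inv]
  -- `t = s / c` minimizes `c t / 2 + L / t`, the bound on `∫_S X` given by `mul_setIntegral_le`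
  have key := hX.mul_setIntegral_le hS₀ (s / c)
  have hrhs : a * (c * (s / c) ^ 2 / 2 - log a) = s / c * (a * s) := by
    rw [sub_eq_add_neg, hlogL]
    field_simp
    rw [hs2]
    ring
  rw [hrhs] at key
  exact le_of_mul_le_mul_left key (by positivity)

end

theorem hasSubgaussianMGF_id_gaussianReal (v : ℝ≥0) :
    HasSubgaussianMGF id v (gaussianReal 0 v) where
  integrable_exp_mul := integrable_exp_mul_gaussianReal
  mgf_le t := by simp [mgf_id_gaussianReal]

theorem hasSubgaussianMGF_inner_stdGaussian {E : Type*} [NormedAddCommGroup E]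
    [InnerProductSpace ℝ E] [FiniteDimensional ℝ E] [MeasurableSpace E] [BorelSpace E] (w : E) :
    HasSubgaussianMGF (fun x ↦ ⟪w, x⟫) (‖w‖₊ ^ 2) (ProbabilityTheory.stdGaussian E) := by
  have hgauss := hasSubgaussianMGF_id_gaussianReal (‖w‖₊ ^ 2)
  have hmap :
      (ProbabilityTheory.stdGaussian E).map (innerSL ℝ w) = gaussianReal 0 (‖w‖₊ ^ 2) := by
    rw [IsGaussian.map_eq_gaussianReal, integral_strongDual_stdGaussian,
      variance_dual_stdGaussian, innerSL_apply_norm]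
    congr
    ext
    simp
  rw [← hmap] at hgauss
  exact (HasSubgaussianMGF.id_map_iff (innerSL ℝ w).continuous.aemeasurable).1 hgauss

theorem stmt_13_general (n : ℕ) (S : Set (EuclideanSpace ℝ (Fin n)))
    (h0 : 0 < stdGaussian n S) (h1 : stdGaussian n S < 1) :
    ‖∫ x in S, x ∂(stdGaussian n)‖
      ≤ (stdGaussian n S).toReal *
        Real.sqrt (2 * Real.log (1 / (stdGaussian n S).toReal)) := by
  rw [show stdGaussian n = ProbabilityTheory.stdGaussian _ from map_pi_eq_stdGaussian] at *
  set γ := ProbabilityTheory.stdGaussian (EuclideanSpace ℝ (Fin n))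
  set v := ∫ x in S, x ∂γ
  show ‖v‖ ≤ γ.real S * √(2 * log (1 / γ.real S))
  have ha₀ : 0 < γ.real S := ENNReal.toReal_pos h0.ne' (h1.trans ENNReal.one_lt_top).ne
  have ha₁ : γ.real S < 1 := by
    simpa [measureReal_def] using ENNReal.toReal_strict_mono ENNReal.one_ne_top h1
  have hv : ‖v‖ * ‖v‖ = ∫ x in S, ⟪v, x⟫ ∂γ := by
    rw [integral_inner IsGaussian.integrable_fun_id.integrableOn, real_inner_self_eq_norm_mul_norm]
  have hbound := (hasSubgaussianMGF_inner_stdGaussian v).setIntegral_le ha₀ ha₁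
  rw [← hv, NNReal.coe_pow, coe_nnnorm, mul_comm 2, mul_assoc, sqrt_mul (sq_nonneg _),
    sqrt_sq (norm_nonneg _), mul_left_comm] at hbound
  rcases (norm_nonneg v).eq_or_lt with hv0 | hv0
  · rw [← hv0]; positivity
  · exact le_of_mul_le_mul_left hbound hv0

/-- Gaussian level-1 inequality: `‖∫_S x dγ‖ ≤ γ(S)·√(2 log(1/γ(S)))`. -/
theorem stmt_13 (n : ℕ) (S : Set (EuclideanSpace ℝ (Fin n))) (hS : MeasurableSet S)
    (h0 : 0 < stdGaussian n S) (h1 : stdGaussian n S < 1) :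
    ‖∫ x in S, x ∂(stdGaussian n)‖
      ≤ (stdGaussian n S).toReal *
        Real.sqrt (2 * Real.log (1 / (stdGaussian n S).toReal)) :=
  stmt_13_general n S h0 h1
end

section
/- Let f(x) = max_{i≤m}(⟨v_i, x⟩ + h·t_i) where v_i ∈ ℝ^n, t_i ∈ ℝ, h ≥ 0. Suppose there are constants M, δ, C > 0 such that for all h ∈ (0,1), E[max_i(⟨v_i, g⟩ + h t_i)] ≤ M + δ + Ch² with g standard Gaussian. Then for any ε ∈ (0,1) and the subset I_ε = {i : t_i ≥ ε}, one has E[max_{i ∈ I_ε}⟨v_i, g⟩] ≤ M + δ − ε²/(4C) provided ε/(2C) < 1, where the maximum over an empty set is interpreted as −∞. -/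
open MeasureTheory ProbabilityTheory Real Finset
open scoped Classical

/-!
On `I_ε` every tilt satisfies `h t_i ≥ h ε`, so pointwise
`max_{i ∈ I_ε} ⟨v_i, g⟩ + h ε ≤ max_i (⟨v_i, g⟩ + h t_i)`. Taking expectations and using the
hypothesis gives `E[max_{i ∈ I_ε} ⟨v_i, g⟩] ≤ M + δ + C h² - ε h`, and `h = ε / (2C)` minimises
the right-hand side, where it equals `M + δ - ε² / (4C)`.
-/

theorem MeasureTheory.Integrable.finset_sup' {ι α : Type*} [MeasurableSpace α] {μ : Measure α}
    {s : Finset ι} (hs : s.Nonempty) {f : ι → α → ℝ} (hf : ∀ i ∈ s, Integrable (f i) μ) :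
    Integrable (fun x => s.sup' hs (fun i => f i x)) μ := by
  simpa only [← Finset.sup'_apply] using
    Finset.sup'_induction hs f (p := (Integrable · μ)) (fun _ h₁ _ h₂ => h₁.sup h₂) hf

theorem stdGaussian_eq_stdGaussian_euclideanSpace (n : ℕ) :
    _root_.stdGaussian n = ProbabilityTheory.stdGaussian (EuclideanSpace ℝ (Fin n)) :=
  map_pi_eq_stdGaussian

theorem ProbabilityTheory.integrable_inner_stdGaussian {E : Type*} [NormedAddCommGroup E]
    [InnerProductSpace ℝ E] [FiniteDimensional ℝ E] [MeasurableSpace E] [BorelSpace E] (v : E) :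
    Integrable (fun x => inner ℝ v x) (stdGaussian E) :=
  IsGaussian.integrable_dual _ (innerSL ℝ v)

theorem finset_sup'_add_mul_le_sup'_add_mul {ι : Type*} {s u : Finset ι} (hsu : s ⊆ u)
    (hs : s.Nonempty) (f t : ι → ℝ) {ε h : ℝ} (hh : 0 ≤ h) (ht : ∀ i ∈ s, ε ≤ t i) :
    s.sup' hs f + h * ε ≤ u.sup' (hs.mono hsu) (fun i => f i + h * t i) := by
  rw [← le_sub_iff_add_le]
  refine Finset.sup'_le hs f fun i hi => le_sub_iff_add_le.2 ?_
  have hi_le := le_sup' (fun i => f i + h * t i) (hsu hi)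
  have := mul_le_mul_of_nonneg_left (ht i hi) hh
  linarith

theorem integral_sup'_add_mul_le_integral_sup'_add_mul {ι α : Type*} [MeasurableSpace α]
    {μ : Measure α} [IsProbabilityMeasure μ] {s u : Finset ι} (hsu : s ⊆ u) (hs : s.Nonempty)
    {f : ι → α → ℝ} (hf : ∀ i ∈ u, Integrable (f i) μ) (t : ι → ℝ) {ε h : ℝ} (hh : 0 ≤ h)
    (ht : ∀ i ∈ s, ε ≤ t i) :
    ∫ x, s.sup' hs (fun i => f i x) ∂μ + h * ε
      ≤ ∫ x, u.sup' (hs.mono hsu) (fun i => f i x + h * t i) ∂μ := by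
  have hs_int := Integrable.finset_sup' hs fun i hi => hf i (hsu hi)
  have hu_int := Integrable.finset_sup' (hs.mono hsu) fun i hi =>
    (hf i hi).add (integrable_const (h * t i))
  have h_shift : ∫ x, (s.sup' hs (fun i => f i x) + h * ε) ∂μ
      = ∫ x, s.sup' hs (fun i => f i x) ∂μ + h * ε := by
    simp [integral_add hs_int (integrable_const _)]
  rw [← h_shift]
  exact integral_mono (hs_int.add (integrable_const _)) hu_int fun x =>
    finset_sup'_add_mul_le_sup'_add_mul hsu hs (f · x) t hh ht

theorem stmt_15_general (n m : ℕ) (hm : Finset.univ.Nonempty (α := Fin m))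
    (v : Fin m → EuclideanSpace ℝ (Fin n)) (t : Fin m → ℝ)
    (M δ C : ℝ) (hC : 0 < C)
    (hbound : ∀ h : ℝ, 0 < h → h < 1 →
      ∫ x, Finset.univ.sup' hm (fun i => (inner ℝ (v i) x : ℝ) + h * t i) ∂(stdGaussian n)
        ≤ M + δ + C * h ^ 2)
    (ε : ℝ) (hε : ε ∈ Set.Ioo (0 : ℝ) 1) (hεC : ε / (2 * C) < 1)
    (hne : (Finset.univ.filter (fun i : Fin m => ε ≤ t i)).Nonempty) :
    ∫ x, (Finset.univ.filter (fun i : Fin m => ε ≤ t i)).sup'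
        hne (fun i => (inner ℝ (v i) x : ℝ)) ∂(stdGaussian n)
      ≤ M + δ - ε ^ 2 / (4 * C) := by
  rw [stdGaussian_eq_stdGaussian_euclideanSpace] at hbound ⊢
  set h := ε / (2 * C) with h_def
  have hh : 0 < h := div_pos hε.1 (by positivity)
  have htilt := integral_sup'_add_mul_le_integral_sup'_add_mul (filter_subset _ univ) hne
    (fun i _ => integrable_inner_stdGaussian (v i)) t hh.le fun i hi => (mem_filter.1 hi).2
  have h_opt : C * h ^ 2 - h * ε = - (ε ^ 2 / (4 * C)) := by
    rw [h_def]; field_simp; ring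
  linarith [hbound h hh hεC]

/-- Quadratic decay of the expected maximum restricted to indices with large tilt,
deduced from a quadratic bound on the tilted expected maximum. -/
theorem stmt_15 (n m : ℕ) (hm : Finset.univ.Nonempty (α := Fin m))
    (v : Fin m → EuclideanSpace ℝ (Fin n)) (t : Fin m → ℝ)
    (M δ C : ℝ) (hM : 0 < M) (hδ : 0 < δ) (hC : 0 < C)
    (hbound : ∀ h : ℝ, 0 < h → h < 1 →
      ∫ x, Finset.univ.sup' hm (fun i => (inner ℝ (v i) x : ℝ) + h * t i) ∂(stdGaussian n)
        ≤ M + δ + C * h ^ 2)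
    (ε : ℝ) (hε : ε ∈ Set.Ioo (0 : ℝ) 1) (hεC : ε / (2 * C) < 1)
    (hne : (Finset.univ.filter (fun i : Fin m => ε ≤ t i)).Nonempty) :
    ∫ x, (Finset.univ.filter (fun i : Fin m => ε ≤ t i)).sup'
        hne (fun i => (inner ℝ (v i) x : ℝ)) ∂(stdGaussian n)
      ≤ M + δ - ε ^ 2 / (4 * C) :=
  stmt_15_general n m hm v t M δ C hC hbound ε hε hεC hne
end
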